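/- Let d_1, ..., d_k ≥ 2 be integers with d_1 + ... + d_k = n + k for some n ≥ 1. For each j set h'_j = (d_1 - 1) + ... + (d_j - 1), so h'_0 = 0 and h'_k = n. Define d^{(i)}_j = 1 if h'_{j-1} < i ≤ h'_j and 0 otherwise, and a^{(i)} = Σ_{j'} d^{(i)}_{j'} · (d_{j'+1} ⋯ d_k). Define b^{(i)} = a^{(i)} + ... + a^{(n)} + 1 (with b^{(n+1)} = 1). Then for h'_{j-1} < i ≤ h'_j one has a^{(i)} = d_{j+1} ⋯ d_k and b^{(i)} = d_{j+1} ⋯ d_k · (h'_j + 2 - i), and min_{1 ≤ i ≤ n} b^{(i)}/b^{(i+1)} = min_{1 ≤ j ≤ k} d_j/(d_j - 1). -/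

import Mathlib

/-! The positions `1, …, n` fall into consecutive blocks, block `j` being `(h' (j-1), h' j]`, of
length `d j - 1`. On block `j` only the indicator `dd i j` survives, so `a` is the constant
`P j = d (j+1) ⋯ d k` there and `b` drops by `P j` at each step; since `d j * P j = P (j-1)`, a
downward induction on `j` gives `b (h' j + 1) = P j`. Hence on block `j` the ratio `b i / b (i+1)`
is `(m + 1) / m` with `m = h' j + 1 - i` running over `1, …, d j - 1`, and its minimum
`d j / (d j - 1)` is attained at the first position of the block. -/

open Finset

theorem Finset.inf'_eq_inf'_of_forall_exists_le {α β γ : Type*} [SemilatticeInf γ]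
    {s : Finset α} {t : Finset β} (hs : s.Nonempty) (ht : t.Nonempty) {f : α → γ} {g : β → γ}
    (hst : ∀ i ∈ s, ∃ j ∈ t, g j ≤ f i) (hts : ∀ j ∈ t, ∃ i ∈ s, f i ≤ g j) :
    s.inf' hs f = t.inf' ht g :=
  le_antisymm
    (le_inf' ht g fun j hj => let ⟨_, hi, h⟩ := hts j hj; inf'_le_of_le f hi h)
    (le_inf' hs f fun i hi => let ⟨_, hj, h⟩ := hst i hi; inf'_le_of_le g hj h)

theorem div_sub_one_le_add_one_div {α : Type*} [Field α] [LinearOrder α] [IsStrictOrderedRing α]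
    {x y : α} (hx : 0 < x) (hxy : x + 1 ≤ y) : y / (y - 1) ≤ (x + 1) / x := by
  rw [div_le_div_iff₀ (by linarith) hx]
  nlinarith

theorem Nat.eq_add_smul_of_forall_eq_add_succ {M : Type*} [AddCommMonoid M] {f : ℕ → M} {c : M}
    {l m : ℕ} (hf : ∀ i, l ≤ i → i < m → f i = c + f (i + 1)) {i : ℕ} (hli : l ≤ i)
    (him : i ≤ m) : f i = f m + (m - i) • c := by
  induction him using Nat.decreasingInduction with
  | self => simp
  | of_succ i hi ih =>
    rw [hf i hli hi, ih (by omega), show m - i = m - (i + 1) + 1 by omega, succ_nsmul,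
      add_comm c, add_assoc]

theorem eq_add_of_eq_sum_Icc_add {M : Type*} [AddCommMonoid M] {a b : ℕ → M} {c : M} {n i : ℕ}
    (hb : ∀ i ∈ Icc 1 n, b i = ∑ i' ∈ Icc i n, a i' + c) (hbn : b (n + 1) = c)
    (hi : 1 ≤ i) (hin : i ≤ n) : b i = a i + b (i + 1) := by
  have hsucc : b (i + 1) = ∑ i' ∈ Icc (i + 1) n, a i' + c := by
    rcases hin.lt_or_eq with hlt | rfl
    · exact hb (i + 1) (mem_Icc.2 ⟨by omega, hlt⟩)
    · simp [hbn]
  rw [hb i (mem_Icc.2 ⟨hi, hin⟩), hsucc, ← add_sum_Ioc_eq_sum_Icc hin,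
    Icc_add_one_left_eq_Ioc, add_assoc]

theorem monotone_of_eq_add {H c : ℕ → ℕ} (hH : ∀ j, H (j + 1) = H j + c j) : Monotone H :=
  monotone_nat_of_le_succ fun j => (hH j).symm ▸ Nat.le_add_right _ _

section Blocks

variable {H : ℕ → ℕ} {i j k : ℕ}

theorem exists_mem_Icc_lt_le_of_le (hH0 : H 0 = 0) (hi : 1 ≤ i) (hik : i ≤ H k) :
    ∃ j ∈ Icc 1 k, H (j - 1) < i ∧ i ≤ H j := by
  classical
  have hex : ∃ j, i ≤ H j := ⟨k, hik⟩
  have hpos : Nat.find hex ≠ 0 := fun h => by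
    have := Nat.find_spec hex
    rw [h, hH0] at this
    omega
  exact ⟨Nat.find hex, mem_Icc.2 ⟨Nat.one_le_iff_ne_zero.2 hpos, Nat.find_min' hex hik⟩,
    not_le.1 (Nat.find_min hex (by omega)), Nat.find_spec hex⟩

theorem Monotone.eq_of_lt_le {j' : ℕ} (hH : Monotone H) (hj : H (j - 1) < i ∧ i ≤ H j)
    (hj' : H (j' - 1) < i ∧ i ≤ H j') : j' = j := by
  by_contra hne
  rcases Nat.lt_or_gt_of_ne hne with h | h
  · have := hH (show j' ≤ j - 1 by omega)
    omega
  · have := hH (show j ≤ j' - 1 by omega)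
    omega

theorem Monotone.sum_ite_lt_le_mul {R : Type*} [NonAssocSemiring R] (hH : Monotone H)
    {s : Finset ℕ} (hjs : j ∈ s) (hj : H (j - 1) < i ∧ i ≤ H j) (f : ℕ → R) :
    ∑ j' ∈ s, (if H (j' - 1) < i ∧ i ≤ H j' then 1 else 0) * f j' = f j := by
  have hiff : ∀ j', (H (j' - 1) < i ∧ i ≤ H j') ↔ j' = j :=
    fun j' => ⟨fun h => hH.eq_of_lt_le hj h, fun h => h ▸ hj⟩
  simp only [hiff, ite_mul, one_mul, zero_mul, sum_ite_eq', hjs, if_true]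

end Blocks

theorem prod_Icc_add_one_eq_mul {M : Type*} [CommMonoid M] {f : ℕ → M} {j k : ℕ}
    (hjk : j + 1 ≤ k) : ∏ x ∈ Icc (j + 1) k, f x = f (j + 1) * ∏ x ∈ Icc (j + 2) k, f x := by
  rw [← mul_prod_Ioc_eq_prod_Icc hjk, ← Icc_add_one_left_eq_Ioc]
  rfl

theorem eq_prod_mul_of_lt_of_le_add_one {d H a b : ℕ → ℕ} {k : ℕ}
    (hd : ∀ j ∈ Icc 1 k, 1 ≤ d j) (hH : ∀ j, H (j + 1) = H j + (d (j + 1) - 1))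
    (ha : ∀ j ∈ Icc 1 k, ∀ i, H (j - 1) < i → i ≤ H j → a i = ∏ j' ∈ Icc (j + 1) k, d j')
    (hb : ∀ i, H 0 < i → i ≤ H k → b i = a i + b (i + 1)) (hbk : b (H k + 1) = 1)
    {j i : ℕ} (hj : j ∈ Icc 1 k) (hi : H (j - 1) < i) (hi' : i ≤ H j + 1) :
    b i = (∏ j' ∈ Icc (j + 1) k, d j') * (H j + 2 - i) := by
  set P : ℕ → ℕ := fun j => ∏ j' ∈ Icc (j + 1) k, d j'
  have hmono : Monotone H := monotone_of_eq_add hH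
  have hblock : ∀ j ∈ Icc 1 k, ∀ i, H (j - 1) < i → i ≤ H j + 1 →
      b i = b (H j + 1) + (H j + 1 - i) * P j := by
    intro j hj i hi hi'
    rw [← smul_eq_mul]
    refine Nat.eq_add_smul_of_forall_eq_add_succ (fun i' hi₁ hi₂ => ?_) hi hi'
    rw [hb i' (by have := hmono (Nat.zero_le (j - 1)); omega)
      (by have := hmono (mem_Icc.1 hj).2; omega), ha j hj i' hi₁ (by omega)]
  have hboundary : ∀ j ≤ k, b (H j + 1) = P j := by
    intro j hjk
    induction hjk using Nat.decreasingInduction with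
    | self => simp [P, hbk]
    | of_succ j hj ih =>
      have hdj := hd (j + 1) (mem_Icc.2 ⟨by omega, hj⟩)
      have hPj : P j = d (j + 1) * P (j + 1) := prod_Icc_add_one_eq_mul hj
      rw [hblock (j + 1) (mem_Icc.2 ⟨by omega, hj⟩) (H j + 1) (by simp) (by rw [hH]; omega),
        ih, hH, hPj, show H j + (d (j + 1) - 1) + 1 - (H j + 1) = d (j + 1) - 1 by omega,
        add_comm, ← add_one_mul, Nat.sub_add_cancel hdj]
  rw [hblock j hj i hi hi', hboundary j (mem_Icc.1 hj).2,
    show H j + 2 - i = H j + 1 - i + 1 by omega]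
  ring

theorem inf'_eq_inf'_div_sub_one {d H : ℕ → ℕ} {r : ℕ → ℚ} {k n : ℕ}
    (hd : ∀ j ∈ Icc 1 k, 2 ≤ d j) (hH0 : H 0 = 0) (hH : ∀ j, H (j + 1) = H j + (d (j + 1) - 1))
    (hHk : H k = n) (hn : (Icc 1 n).Nonempty) (hk : (Icc 1 k).Nonempty)
    (hr : ∀ j ∈ Icc 1 k, ∀ i, H (j - 1) < i → i ≤ H j →
      r i = ((H j + 1 - i : ℕ) + 1 : ℚ) / (H j + 1 - i : ℕ)) :
    (Icc 1 n).inf' hn r = (Icc 1 k).inf' hk fun j => (d j : ℚ) / (d j - 1) := by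
  have hmono : Monotone H := monotone_of_eq_add hH
  have hHsub : ∀ j ∈ Icc 1 k, H j = H (j - 1) + (d j - 1) := fun j hj => by
    simpa [Nat.sub_add_cancel (mem_Icc.1 hj).1] using hH (j - 1)
  refine inf'_eq_inf'_of_forall_exists_le _ _ (fun i hi => ?_) (fun j hj => ?_)
  · obtain ⟨j, hj, hi, hi'⟩ :=
      exists_mem_Icc_lt_le_of_le hH0 (mem_Icc.1 hi).1 (hHk ▸ (mem_Icc.1 hi).2)
    have := hHsub j hj
    refine ⟨j, hj, ?_⟩
    rw [hr j hj i hi hi']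
    exact div_sub_one_le_add_one_div (by norm_cast; omega) (by norm_cast; omega)
  · have := hHsub j hj
    have := hd j hj
    have := hmono (mem_Icc.1 hj).2
    refine ⟨H (j - 1) + 1, mem_Icc.2 ⟨by omega, by omega⟩, le_of_eq ?_⟩
    rw [hr j hj _ (by omega) (by omega), show H j + 1 - (H (j - 1) + 1) = d j - 1 by omega,
      Nat.cast_sub (by omega)]
    simp

/-- For integers `d 1, …, d k ≥ 2` with `∑ d j = n + k` (`n ≥ 1`), set
`h' j = (d 1 - 1) + ⋯ + (d j - 1)` (so `h' 0 = 0`, `h' k = n`), `dd i j = 1` if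
`h' (j-1) < i ≤ h' j` and `0` otherwise, `a i = ∑_{j'} dd i j' * ∏_{j'' > j'} d j''`,
and `b i = a i + ⋯ + a n + 1` (`b (n+1) = 1`). Then for `h' (j-1) < i ≤ h' j` one has
`a i = ∏_{j''=j+1}^{k} d j''` and `b i = (∏_{j''=j+1}^{k} d j'') * (h' j + 2 - i)`, and
`min_{1 ≤ i ≤ n} b i / b (i+1) = min_{1 ≤ j ≤ k} d j / (d j - 1)`. -/
theorem fano_complete_intersection_ratios (n k : ℕ) (hn : 1 ≤ n) (hk : 1 ≤ k)
    (d : ℕ → ℕ) (hd2 : ∀ j ∈ Icc 1 k, 2 ≤ d j) (hsum : ∑ j ∈ Icc 1 k, d j = n + k)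
    (h' : ℕ → ℕ) (hh' : ∀ j, h' j = ∑ j' ∈ Icc 1 j, (d j' - 1))
    (dd : ℕ → ℕ → ℕ)
    (hdd : ∀ i j, dd i j = if h' (j - 1) < i ∧ i ≤ h' j then 1 else 0)
    (a : ℕ → ℕ)
    (ha : ∀ i, a i = ∑ j' ∈ Icc 1 k, dd i j' * ∏ j'' ∈ Icc (j' + 1) k, d j'')
    (b : ℕ → ℕ) (hb : ∀ i ∈ Icc 1 n, b i = (∑ i' ∈ Icc i n, a i') + 1)
    (hb' : b (n + 1) = 1) :
    (∀ j ∈ Icc 1 k, ∀ i, h' (j - 1) < i → i ≤ h' j →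
        a i = ∏ j'' ∈ Icc (j + 1) k, d j'' ∧
        b i = (∏ j'' ∈ Icc (j + 1) k, d j'') * (h' j + 2 - i)) ∧
      (Icc 1 n).inf' (by simp [hn]) (fun i => (b i : ℚ) / (b (i + 1) : ℚ)) =
        (Icc 1 k).inf' (by simp [hk]) (fun j => (d j : ℚ) / ((d j : ℚ) - 1)) := by
  have hd1 : ∀ j ∈ Icc 1 k, 1 ≤ d j := fun j hj => one_le_two.trans (hd2 j hj)
  have hH : ∀ j, h' (j + 1) = h' j + (d (j + 1) - 1) := fun j => by
    rw [hh', hh', sum_Icc_succ_top (by omega)]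
  have hHk : h' k = n := by
    rw [hh', sum_tsub_distrib _ hd1, hsum]
    simp
  have hA : ∀ j ∈ Icc 1 k, ∀ i, h' (j - 1) < i → i ≤ h' j →
      a i = ∏ j'' ∈ Icc (j + 1) k, d j'' := fun j hj i hi hi' => by
    simp only [ha, hdd]
    exact (monotone_of_eq_add hH).sum_ite_lt_le_mul hj ⟨hi, hi'⟩ _
  have hB : ∀ j ∈ Icc 1 k, ∀ i, h' (j - 1) < i → i ≤ h' j + 1 →
      b i = (∏ j'' ∈ Icc (j + 1) k, d j'') * (h' j + 2 - i) := fun j hj i =>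
    eq_prod_mul_of_lt_of_le_add_one hd1 hH hA
      (fun i hi hi' => eq_add_of_eq_sum_Icc_add hb hb' (by omega) (by omega)) (by rw [hHk, hb']) hj
  refine ⟨fun j hj i hi hi' => ⟨hA j hj i hi hi', hB j hj i hi (by omega)⟩,
    inf'_eq_inf'_div_sub_one hd2 (by simp [hh']) hH hHk _ _ fun j hj i hi hi' => ?_⟩
  have hP : (∏ j'' ∈ Icc (j + 1) k, d j'' : ℚ) ≠ 0 := prod_ne_zero_iff.2 fun x hx => by
    have := hd1 x (Icc_subset_Icc_left (by omega) hx)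
    positivity
  rw [hB j hj i hi (by omega), hB j hj (i + 1) (by omega) (by omega),
    show h' j + 2 - i = h' j + 1 - i + 1 by omega, show h' j + 2 - (i + 1) = h' j + 1 - i by omega]
  push_cast
  exact mul_div_mul_left _ _ hP
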